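/- Let k be a real number with k > 1 and set w± = (2k − 1 ± √(2k² − 2k + 1))/(k − 1). Then w⁺ and w⁻ are distinct positive real numbers and the two points (z₁, z₂, z₃) = (1, w⁺, w⁺) and (1, w⁻, w⁻) are solutions of the system S₁ = 0, S₂ = 0, S₃ = 0. (These solutions correspond to Jensen's Einstein metrics on the Stiefel manifold SO(1+2k)/SO(k).) -/
import Mathlib


/-- First polynomial of the compactified normalized Ricci flow at infinity for the
Stiefel manifold SO(1+2k)/SO(k). -/
noncomputable def S₁ (k z₁ z₂ z₃ : ℝ) : ℝ :=
  z₁ * (k * z₁ * (-z₁ ^ 2 * z₂ + z₁ * z₃ + z₂ * (z₂ - z₃) ^ 2)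
    + (z₁ - 1) * z₂ ^ 2 * z₃ * (k * (z₁ - 1) - 2 * z₁))

/-- Second polynomial of the compactified normalized Ricci flow at infinity for the
Stiefel manifold SO(1+2k)/SO(k). -/
noncomputable def S₂ (k z₁ z₂ z₃ : ℝ) : ℝ :=
  z₂ * (z₁ ^ 2 * z₃ * ((k - 2) * z₂ ^ 2 + (2 - 4 * k) * z₂ + 2 * k - 1)
    + z₁ ^ 3 * z₂ + z₁ * z₂ * (z₃ ^ 2 - z₂ ^ 2) + z₂ ^ 2 * z₃)

/-- Third polynomial of the compactified normalized Ricci flow at infinity for the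
Stiefel manifold SO(1+2k)/SO(k). -/
noncomputable def S₃ (k z₁ z₂ z₃ : ℝ) : ℝ :=
  z₃ * (k * z₁ * (z₁ ^ 2 * z₂ + z₁ * (z₂ ^ 2 * (z₃ - 4) + z₃) + z₂ ^ 3 - z₂ * z₃ ^ 2)
    + z₂ ^ 2 * (z₃ - 2 * z₁ ^ 2 * (z₃ - 1)))

theorem jensen_einstein_metrics (k : ℝ) (hk : 1 < k) :
    (2 * k - 1 + Real.sqrt (2 * k ^ 2 - 2 * k + 1)) / (k - 1) ≠
      (2 * k - 1 - Real.sqrt (2 * k ^ 2 - 2 * k + 1)) / (k - 1) ∧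
    0 < (2 * k - 1 + Real.sqrt (2 * k ^ 2 - 2 * k + 1)) / (k - 1) ∧
    0 < (2 * k - 1 - Real.sqrt (2 * k ^ 2 - 2 * k + 1)) / (k - 1) ∧
    (∀ w : ℝ, (w = (2 * k - 1 + Real.sqrt (2 * k ^ 2 - 2 * k + 1)) / (k - 1) ∨
        w = (2 * k - 1 - Real.sqrt (2 * k ^ 2 - 2 * k + 1)) / (k - 1)) →
      S₁ k 1 w w = 0 ∧ S₂ k 1 w w = 0 ∧ S₃ k 1 w w = 0) := by
  have hk0 : (0:ℝ) < k - 1 := by linarith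
  have hkne : k - 1 ≠ 0 := ne_of_gt hk0
  set s := Real.sqrt (2 * k ^ 2 - 2 * k + 1) with hs
  have hD : (0:ℝ) < 2 * k ^ 2 - 2 * k + 1 := by nlinarith
  have hs2 : s ^ 2 = 2 * k ^ 2 - 2 * k + 1 := Real.sq_sqrt hD.le
  have hspos : 0 < s := Real.sqrt_pos.mpr hD
  have hslt : s < 2 * k - 1 := by nlinarith
  refine ⟨?_, ?_, ?_, ?_⟩
  · intro h
    have := (div_left_inj' hkne).mp h
    linarith
  · apply div_pos (by linarith) hk0
  · apply div_pos (by linarith) hk0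
  · intro w hw
    have hQ : (k - 1) * w ^ 2 - 2 * (2 * k - 1) * w + 2 * k = 0 := by
      rcases hw with h | h <;> subst h <;> field_simp <;> nlinarith [hs2]
    refine ⟨?_, ?_, ?_⟩
    · simp only [S₁]; ring
    · simp only [S₂]; linear_combination w ^ 2 * hQ
    · simp only [S₃]; linear_combination w ^ 2 * hQ
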